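/- Consider the 1-disjointness problem: n players hold strings A^i ∈ S^i ⊆ {0,1}^l with the promise that every joint input in S^1 × … × S^n has at most one intersecting bit (a bit k with A^i_k = 1 for all i). Suppose there is an intersecting bit k, and for each player i define the neighborhood N_i(k) = {j : ∃A ∈ S^i, A_j = 1 and A_k = 1}. If |N_i(k)| > (1 − 1/(2n))·r for all i (with r the number of candidate bits), then |∩_i N_i(k)| > r/2 ≥ 2, and picking k' ≠ k in the intersection yields, via strings C^i ∈ S^i with C^i_k = C^i_{k'} = 1, a joint input with at least two intersecting bits — contradicting the promise. Hence at least one player's neighborhood of the intersecting bit has size at most (1 − 1/(2n))·r. -/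

import Mathlib

/-!
If every player's neighborhood `N_i(k)` missed fewer than `l / (2n)` bits, the union bound would
leave more than `l / 2 ≥ 1` bits in the intersection of the neighborhoods, so some `j ≠ k` would
lie in every `N_i(k)`. Choosing for each player an input containing both `j` and `k` gives a
joint input with two intersecting bits, against the promise.
-/

open Finset

section

variable {ι α : Type*} [Fintype ι] [Fintype α] [DecidableEq α]

theorem Finset.card_compl_inf_le_sum (s : ι → Finset α) :
    #(univ.inf s)ᶜ ≤ ∑ i, #(s i)ᶜ := by
  rw [Finset.compl_inf, sup_eq_biUnion]
  exact card_biUnion_le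

theorem Finset.card_sub_mul_lt_card_inf [Nonempty ι] {s : ι → Finset α} {ε : ℝ}
    (hs : ∀ i, (Fintype.card α : ℝ) - ε < #(s i)) :
    (Fintype.card α : ℝ) - Fintype.card ι * ε < #(univ.inf s) := by
  have card_compl' (t : Finset α) : (#tᶜ : ℝ) = Fintype.card α - #t := by
    rw [card_compl, Nat.cast_sub (card_le_univ t)]
  have hcompl : (#(univ.inf s)ᶜ : ℝ) < Fintype.card ι * ε := calc
    (#(univ.inf s)ᶜ : ℝ) ≤ ∑ i, (#(s i)ᶜ : ℝ) := mod_cast card_compl_inf_le_sum s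
    _ < ∑ _i : ι, ε :=
      sum_lt_sum_of_nonempty univ_nonempty fun i _ => by rw [card_compl']; linarith [hs i]
    _ = Fintype.card ι * ε := by simp
  rw [card_compl'] at hcompl
  linarith

def neighborhood (S : Finset (α → Bool)) (k : α) : Finset α :=
  univ.filter fun j => ∃ C ∈ S, C j = true ∧ C k = true

def intersectingBits (A : ι → α → Bool) : Finset α :=
  univ.filter fun k => ∀ i, A i k = true

theorem inf_neighborhood_subset_singleton {S : ι → Finset (α → Bool)}
    (hpromise : ∀ A : ι → α → Bool, (∀ i, A i ∈ S i) → #(intersectingBits A) ≤ 1) (k : α) :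
    univ.inf (fun i => neighborhood (S i) k) ⊆ {k} := by
  intro j hj
  simp only [mem_inf, mem_univ, true_implies, neighborhood, mem_filter, true_and] at hj
  choose C hCS hCj hCk using hj
  have hpair : {j, k} ⊆ intersectingBits C := by
    simp [insert_subset_iff, intersectingBits, hCj, hCk]
  by_contra hjk
  have := (card_le_card hpair).trans (hpromise C hCS)
  rw [card_pair (by simpa using hjk)] at this
  omega

end

theorem stmt16_general (n l : ℕ) (hn : 1 ≤ n) (hl : 2 ≤ l)
    (S : Fin n → Finset (Fin l → Bool))
    (hpromise : ∀ A : Fin n → Fin l → Bool, (∀ i, A i ∈ S i) →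
      (Finset.univ.filter (fun k : Fin l => ∀ i, A i k = true)).card ≤ 1)
    (A : Fin n → Fin l → Bool)
    (k : Fin l) :
    ∃ i : Fin n,
      (((Finset.univ.filter
          (fun j : Fin l => ∃ C ∈ S i, C j = true ∧ C k = true)).card : ℝ)
        ≤ (1 - 1 / (2 * (n : ℝ))) * (l : ℝ)) := by
  by_contra! hlarge
  have : Nonempty (Fin n) := ⟨⟨0, hn⟩⟩
  have hn' : (0 : ℝ) < n := by exact_mod_cast hn
  have hcommon := card_sub_mul_lt_card_inf (s := fun i => neighborhood (S i) k)
    (ε := l / (2 * n)) fun i => by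
      rw [Fintype.card_fin]
      exact lt_of_eq_of_lt (by ring) (hlarge i)
  have hhalf : (Fintype.card (Fin n) : ℝ) * (l / (2 * n)) = l / 2 := by
    rw [Fintype.card_fin]; field_simp
  -- `convert`: the decidability instance of `∀ i : Fin n` differs from the one for a general `ι`.
  have hsingle : #(univ.inf fun i => neighborhood (S i) k) ≤ 1 :=
    (card_le_card (inf_neighborhood_subset_singleton
      (fun A hA => by unfold intersectingBits; convert hpromise A hA) k)).trans (card_singleton k).le
  have hl' : (2 : ℝ) ≤ l := by exact_mod_cast hl
  have hsingle' : (#(univ.inf fun i => neighborhood (S i) k) : ℝ) ≤ 1 := by exact_mod_cast hsingle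
  rw [hhalf, Fintype.card_fin] at hcommon
  linarith

/-- Key claim in the protocol for 1-disjointness: under the promise that every joint
input has at most one intersecting bit, if bit `k` intersects at input `A`, then at
least one player's neighborhood `N_i(k) = {j : ∃ C ∈ S_i, C_j = 1 ∧ C_k = 1}` has size
at most `(1 - 1/(2n))·l`. -/
theorem stmt16 (n l : ℕ) (hn : 1 ≤ n) (hl : 2 ≤ l)
    (S : Fin n → Finset (Fin l → Bool))
    (hpromise : ∀ A : Fin n → Fin l → Bool, (∀ i, A i ∈ S i) →
      (Finset.univ.filter (fun k : Fin l => ∀ i, A i k = true)).card ≤ 1)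
    (A : Fin n → Fin l → Bool) (hA : ∀ i, A i ∈ S i)
    (k : Fin l) (hk : ∀ i, A i k = true) :
    ∃ i : Fin n,
      (((Finset.univ.filter
          (fun j : Fin l => ∃ C ∈ S i, C j = true ∧ C k = true)).card : ℝ)
        ≤ (1 - 1 / (2 * (n : ℝ))) * (l : ℝ)) :=
  stmt16_general n l hn hl S hpromise A k
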